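/- arXiv:1302.0019 — 3 statements merged into one kernel-verified Lean document; each statement's English description precedes it below -/
import Mathlib

section
/- For q_0 = 5/6 and q_1 = 1/6: the complete tree with codewords {0, 1} achieves I-divergence per bit (−1 − (1/2)log₂(q_0 q_1))/1, while the non-complete tree with codewords {0, 10} achieves (−1 − (1/2)log₂(q_0² q_1))/(3/2), and the latter is strictly smaller than the former. -/
open Finset Real

/-- number of zeros in a binary string -/
def zeros (w : List Bool) : ℕ := w.count false
/-- number of ones in a binary string -/
def ones (w : List Bool) : ℕ := w.count true
/-- product weight of a binary string -/
noncomputable def Qw (q0 q1 : ℝ) (w : List Bool) : ℝ := q0 ^ zeros w * q1 ^ ones w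

/-- C is prefix-free -/
def PrefixFree (C : Finset (List Bool)) : Prop :=
  ∀ u ∈ C, ∀ v ∈ C, u <+: v → u = v

/-- C is a maximal prefix-free set: the leaves of a complete binary tree -/
def MaximalPrefixFree (C : Finset (List Bool)) : Prop :=
  PrefixFree C ∧
    ∀ s : ℕ → Bool, ∃ w ∈ C, ∀ i : Fin w.length, w.get i = s i.val

/-- informational divergence D(U‖Q) for the uniform distribution on C -/
noncomputable def Dkl (q0 q1 : ℝ) (C : Finset (List Bool)) : ℝ :=
  ∑ w ∈ C, ((C.card : ℝ))⁻¹ * Real.logb 2 (((C.card : ℝ))⁻¹ / Qw q0 q1 w)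

/-- expected codeword length under the uniform distribution on C -/
noncomputable def EL (C : Finset (List Bool)) : ℝ :=
  ∑ w ∈ C, ((C.card : ℝ))⁻¹ * (w.length : ℝ)


/-! With `a = log₂ q₀` and `b = log₂ q₁`, the per-bit divergence of `{0, 1}` minus that of
`{0, 10}` equals `(a - b - 2) / 6`, so the non-complete tree is better exactly when
`q₀ > 4 q₁`. -/

lemma two_lt_logb_sub_logb_of_four_mul_lt {q₀ q₁ : ℝ} (h₁ : 0 < q₁) (h : 4 * q₁ < q₀) :
    2 < logb 2 q₀ - logb 2 q₁ := by
  rw [← logb_div (h₁.trans_le (by linarith)).ne' h₁.ne']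
  calc (2 : ℝ) = logb 2 4 := by
        rw [show (4 : ℝ) = 2 ^ (2 : ℝ) by norm_num, logb_rpow (by norm_num) (by norm_num)]
    _ < logb 2 (q₀ / q₁) := logb_lt_logb (by norm_num) (by norm_num) ((lt_div_iff₀ h₁).2 h)

theorem divergence_per_bit_lt_of_four_mul_lt {q₀ q₁ : ℝ} (h₁ : 0 < q₁) (h : 4 * q₁ < q₀) :
    (-1 - (1 / 2) * logb 2 (q₀ ^ 2 * q₁)) / (3 / 2) <
      (-1 - (1 / 2) * logb 2 (q₀ * q₁)) / 1 := by
  have h₀ : q₀ ≠ 0 := (h₁.trans_le (by linarith)).ne'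
  have key := two_lt_logb_sub_logb_of_four_mul_lt h₁ h
  rw [logb_mul (pow_ne_zero 2 h₀) h₁.ne', logb_mul h₀ h₁.ne', logb_pow]
  push_cast
  linarith

theorem stmt7 :
    (-1 - (1 / 2) * Real.logb 2 ((5 / 6 : ℝ) ^ 2 * (1 / 6))) / (3 / 2) <
      (-1 - (1 / 2) * Real.logb 2 ((5 / 6 : ℝ) * (1 / 6))) / 1 :=
  divergence_per_bit_lt_of_four_mul_lt (by norm_num) (by norm_num)
end

section
/- Let 𝒯 be a nonempty finite set and F, G: 𝒯 → ℝ_{>0}. Define a sequence: pick T_0 minimizing F; given T_i, set Δ_i = F(T_i)/G(T_i) and choose T_{i+1} minimizing F(T) − Δ_i G(T) over 𝒯. Then either F(T_{i+1}) − Δ_i G(T_{i+1}) = 0, in which case Δ_i = min_T F(T)/G(T), or Δ_{i+1} < Δ_i strictly. Consequently the iteration reaches the minimum of F/G in finitely many steps. -/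
/-!
Dinkelbach's argument. Write `Δ = F t / G t` for the current point `t`; its gap
`F t - Δ * G t` is zero, so the minimal gap is `≤ 0`. If the minimal gap is `0`, then
`F S - Δ * G S ≥ 0` for every `S`, i.e. `Δ ≤ F S / G S` since `G S > 0`. Otherwise the
minimiser `u` has `F u < Δ * G u`, i.e. its ratio is strictly smaller. The ratios take
values in a finite set, so they cannot decrease strictly forever.
-/

section Dinkelbach

variable {α : Type*} {s : Set α} {F G : α → ℝ} {Δ : ℝ} {u : α}

theorem le_div_of_min_sub_mul_eq_zero (hG : ∀ S ∈ s, 0 < G S)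
    (hmin : ∀ S ∈ s, F u - Δ * G u ≤ F S - Δ * G S) (hzero : F u - Δ * G u = 0) :
    ∀ S ∈ s, Δ ≤ F S / G S := by
  intro S hS
  have := hmin S hS
  rw [le_div_iff₀ (hG S hS)]
  linarith

theorem div_lt_div_of_min_sub_mul_ne_zero {t : α} (ht : t ∈ s) (hGt : 0 < G t)
    (hGu : 0 < G u) (hmin : ∀ S ∈ s, F u - F t / G t * G u ≤ F S - F t / G t * G S)
    (hne : F u - F t / G t * G u ≠ 0) :
    F u / G u < F t / G t := by
  have hgap_t : F t - F t / G t * G t = 0 := by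
    rw [div_mul_cancel₀ _ hGt.ne', sub_self]
  have hgap_u : F u - F t / G t * G u < 0 := (hgap_t ▸ hmin t ht).lt_of_ne hne
  rw [div_lt_iff₀ hGu]
  linarith

end Dinkelbach

theorem exists_not_succ_lt_of_forall_mem_finite {β : Type*} [Preorder β] {s : Set β}
    (hs : s.Finite) {f : ℕ → β} (hf : ∀ i, f i ∈ s) : ∃ i, ¬ f (i + 1) < f i := by
  by_contra! hlt
  exact hs.not_infinite <|
    Set.infinite_of_injective_forall_mem (strictAnti_nat_of_succ_lt hlt).injective hf

theorem stmt15_general {α : Type*} (𝒯 : Finset α) (F G : α → ℝ)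
    (hG : ∀ T ∈ 𝒯, 0 < G T)
    (T : ℕ → α) (hTmem : ∀ i, T i ∈ 𝒯)
    (hstep : ∀ i, ∀ S ∈ 𝒯,
      F (T (i + 1)) - (F (T i) / G (T i)) * G (T (i + 1)) ≤
        F S - (F (T i) / G (T i)) * G S) :
    (∀ i, (F (T (i + 1)) - (F (T i) / G (T i)) * G (T (i + 1)) = 0 →
            ∀ S ∈ 𝒯, F (T i) / G (T i) ≤ F S / G S) ∧
          (F (T (i + 1)) - (F (T i) / G (T i)) * G (T (i + 1)) ≠ 0 →
            F (T (i + 1)) / G (T (i + 1)) < F (T i) / G (T i))) ∧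
    ∃ i, ∀ S ∈ 𝒯, F (T i) / G (T i) ≤ F S / G S := by
  have hstop i := le_div_of_min_sub_mul_eq_zero hG (hstep i)
  have hdecrease i := div_lt_div_of_min_sub_mul_ne_zero (hTmem i) (hG _ (hTmem i))
    (hG _ (hTmem (i + 1))) (hstep i)
  refine ⟨fun i => ⟨hstop i, hdecrease i⟩, ?_⟩
  obtain ⟨i, hi⟩ := exists_not_succ_lt_of_forall_mem_finite
    (𝒯.image fun S => F S / G S).finite_toSet
    (fun i => Finset.mem_coe.2 (Finset.mem_image_of_mem _ (hTmem i)))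
  exact ⟨i, hstop i (not_not.1 (mt (hdecrease i) hi))⟩

theorem stmt15 {α : Type*} (𝒯 : Finset α) (hne : 𝒯.Nonempty) (F G : α → ℝ)
    (hF : ∀ T ∈ 𝒯, 0 < F T) (hG : ∀ T ∈ 𝒯, 0 < G T)
    (T : ℕ → α) (hTmem : ∀ i, T i ∈ 𝒯)
    (h0 : ∀ S ∈ 𝒯, F (T 0) ≤ F S)
    (hstep : ∀ i, ∀ S ∈ 𝒯,
      F (T (i + 1)) - (F (T i) / G (T i)) * G (T (i + 1)) ≤
        F S - (F (T i) / G (T i)) * G S) :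
    (∀ i, (F (T (i + 1)) - (F (T i) / G (T i)) * G (T (i + 1)) = 0 →
            ∀ S ∈ 𝒯, F (T i) / G (T i) ≤ F S / G S) ∧
          (F (T (i + 1)) - (F (T i) / G (T i)) * G (T (i + 1)) ≠ 0 →
            F (T (i + 1)) / G (T (i + 1)) < F (T i) / G (T i))) ∧
    ∃ i, ∀ S ∈ 𝒯, F (T i) / G (T i) ≤ F S / G S :=
  stmt15_general 𝒯 F G hG T hTmem hstep
end

section
/- Let q_0, q_1 > 0 with max{q_0,q_1} ≤ 4·min{q_0,q_1} and q_0 + q_1 = 1, and let Δ_m be the minimum of D(U‖Q)/E_U[L] over complete binary trees with 2^m leaves. Then for every m ≥ 1, Δ_m ≤ −1 − (1/2)log₂(q_0 q_1), and consequently both q_0·2^{Δ_m} ≤ 1 and q_1·2^{Δ_m} ≤ 1. -/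
open Finset Real

/-!
The complete tree of depth `m` is admissible for `Δ m`, so `Δ m` is at most its ratio. Flipping
every bit of a word is a bijection of the tree, and a word and its flip have weights multiplying
to `(q0 q1)^m`; hence the average of `log₂ Q(w)` over the tree is `(m/2) log₂(q0 q1)`, giving
`D/E[L] = -1 - ½ log₂(q0 q1)`. Finally `q0 · 2^x ≤ 1` means `x ≤ -log₂ q0`, which for this value
of `x` reads `log₂(q0/q1) ≤ 2`, i.e. `q0 ≤ 4 q1`.
-/

def wordsOfLength (m : ℕ) : Finset (List Bool) :=
  (univ : Finset (Fin m → Bool)).map ⟨List.ofFn, List.ofFn_injective⟩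

theorem mem_wordsOfLength {m : ℕ} {w : List Bool} : w ∈ wordsOfLength m ↔ w.length = m := by
  simp only [wordsOfLength, mem_map, mem_univ, true_and, Function.Embedding.coeFn_mk]
  constructor
  · rintro ⟨f, rfl⟩
    exact List.length_ofFn
  · rintro rfl
    exact ⟨fun i => w[i], List.ofFn_getElem⟩

theorem card_wordsOfLength (m : ℕ) : (wordsOfLength m).card = 2 ^ m := by
  simp [wordsOfLength]

theorem maximalPrefixFree_wordsOfLength (m : ℕ) : MaximalPrefixFree (wordsOfLength m) := by
  refine ⟨fun u hu v hv huv => huv.eq_of_length ?_, fun s => ?_⟩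
  · rw [mem_wordsOfLength.1 hu, mem_wordsOfLength.1 hv]
  · exact ⟨List.ofFn fun i : Fin m => s i, mem_wordsOfLength.2 List.length_ofFn, by simp⟩

theorem map_not_mem_wordsOfLength {m : ℕ} {w : List Bool} (hw : w ∈ wordsOfLength m) :
    w.map not ∈ wordsOfLength m := by
  rwa [mem_wordsOfLength, List.length_map, ← mem_wordsOfLength]

theorem Qw_pos {q0 q1 : ℝ} (hq0 : 0 < q0) (hq1 : 0 < q1) (w : List Bool) : 0 < Qw q0 q1 w := by
  unfold Qw; positivity

theorem Qw_mul_Qw_map_not (q0 q1 : ℝ) (w : List Bool) :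
    Qw q0 q1 w * Qw q0 q1 (w.map not) = (q0 * q1) ^ w.length := by
  have hzeros : zeros (w.map not) = ones w :=
    List.count_map_of_injective w not Bool.not_injective true
  have hones : ones (w.map not) = zeros w :=
    List.count_map_of_injective w not Bool.not_injective false
  rw [Qw, Qw, hzeros, hones, ← List.count_false_add_count_true w, mul_pow, pow_add, pow_add]
  simp only [zeros, ones]
  ring

theorem sum_logb_Qw_wordsOfLength {q0 q1 : ℝ} (hq0 : 0 < q0) (hq1 : 0 < q1) (m : ℕ) :
    ∑ w ∈ wordsOfLength m, logb 2 (Qw q0 q1 w) = 2 ^ m * (m / 2 * logb 2 (q0 * q1)) := by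
  have hflip : ∑ w ∈ wordsOfLength m, logb 2 (Qw q0 q1 (w.map not))
      = ∑ w ∈ wordsOfLength m, logb 2 (Qw q0 q1 w) :=
    sum_nbij' (List.map not) (List.map not) (fun _ => map_not_mem_wordsOfLength)
      (fun _ => map_not_mem_wordsOfLength) (by simp [Function.comp_def])
      (by simp [Function.comp_def]) (by simp)
  have hpair : ∑ w ∈ wordsOfLength m, (logb 2 (Qw q0 q1 w) + logb 2 (Qw q0 q1 (w.map not)))
      = ∑ w ∈ wordsOfLength m, (m * logb 2 (q0 * q1)) := by
    refine sum_congr rfl fun w hw => ?_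
    rw [← logb_mul (Qw_pos hq0 hq1 w).ne' (Qw_pos hq0 hq1 _).ne', Qw_mul_Qw_map_not,
      mem_wordsOfLength.1 hw, logb_pow]
  rw [sum_add_distrib, hflip, sum_const, card_wordsOfLength, nsmul_eq_mul] at hpair
  push_cast at hpair
  linarith

theorem EL_wordsOfLength (m : ℕ) : EL (wordsOfLength m) = m := by
  rw [EL, sum_congr rfl fun w hw => by rw [mem_wordsOfLength.1 hw], sum_const, card_wordsOfLength,
    nsmul_eq_mul]
  push_cast
  field_simp

theorem Dkl_wordsOfLength {q0 q1 : ℝ} (hq0 : 0 < q0) (hq1 : 0 < q1) (m : ℕ) :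
    Dkl q0 q1 (wordsOfLength m) = m * (-1 - (1 / 2) * logb 2 (q0 * q1)) := by
  have hterm : ∀ w ∈ wordsOfLength m, ((wordsOfLength m).card : ℝ)⁻¹ *
      logb 2 (((wordsOfLength m).card : ℝ)⁻¹ / Qw q0 q1 w)
      = ((2 : ℝ) ^ m)⁻¹ * (-m - logb 2 (Qw q0 q1 w)) := by
    intro w _
    rw [card_wordsOfLength, Nat.cast_pow, Nat.cast_ofNat,
      logb_div (by positivity) (Qw_pos hq0 hq1 w).ne', logb_inv, logb_pow,
      logb_self_eq_one one_lt_two, mul_one]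
  rw [Dkl, sum_congr rfl hterm, ← mul_sum, sum_sub_distrib, sum_logb_Qw_wordsOfLength hq0 hq1,
    sum_const, card_wordsOfLength, nsmul_eq_mul]
  push_cast
  field_simp

theorem mul_two_rpow_le_one_iff {a x : ℝ} (ha : 0 < a) : a * 2 ^ x ≤ 1 ↔ x ≤ -logb 2 a := by
  rw [← logb_inv, le_logb_iff_rpow_le one_lt_two (inv_pos.2 ha), ← mul_one a⁻¹,
    le_inv_mul_iff₀ ha]

theorem neg_one_sub_half_logb_le {q0 q1 : ℝ} (hq0 : 0 < q0) (hq1 : 0 < q1) (h : q0 ≤ 4 * q1) :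
    -1 - (1 / 2) * logb 2 (q0 * q1) ≤ -logb 2 q0 := by
  have h4 : logb 2 q0 ≤ logb 2 (4 * q1) := (logb_le_logb one_lt_two hq0 (by positivity)).2 h
  have hlog4 : logb 2 4 = 2 := by
    rw [show (4 : ℝ) = 2 ^ (2 : ℕ) by norm_num, logb_pow, logb_self_eq_one one_lt_two]; norm_num
  rw [logb_mul (by norm_num) hq1.ne', hlog4] at h4
  rw [logb_mul hq0.ne' hq1.ne']
  linarith

theorem stmt18_general (q0 q1 : ℝ) (hq0 : 0 < q0) (hq1 : 0 < q1)
    (hcond : max q0 q1 ≤ 4 * min q0 q1) (Δ : ℕ → ℝ)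
    (hΔ : ∀ m, 1 ≤ m → IsLeast {x : ℝ | ∃ C : Finset (List Bool),
        MaximalPrefixFree C ∧ C.card = 2 ^ m ∧ x = Dkl q0 q1 C / EL C} (Δ m)) :
    ∀ m, 1 ≤ m → Δ m ≤ -1 - (1 / 2) * Real.logb 2 (q0 * q1) ∧
      q0 * (2 : ℝ) ^ (Δ m) ≤ 1 ∧ q1 * (2 : ℝ) ^ (Δ m) ≤ 1 := by
  intro m hm
  have hle : Δ m ≤ -1 - (1 / 2) * logb 2 (q0 * q1) := by
    refine (hΔ m hm).2 ⟨wordsOfLength m, maximalPrefixFree_wordsOfLength m,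
      card_wordsOfLength m, ?_⟩
    rw [Dkl_wordsOfLength hq0 hq1, EL_wordsOfLength,
      mul_div_cancel_left₀ _ (Nat.cast_ne_zero.2 (by omega))]
  have h01 : q0 ≤ 4 * q1 :=
    (le_max_left _ _).trans (hcond.trans (by gcongr; exact min_le_right _ _))
  have h10 : q1 ≤ 4 * q0 :=
    (le_max_right _ _).trans (hcond.trans (by gcongr; exact min_le_left _ _))
  refine ⟨hle, (mul_two_rpow_le_one_iff hq0).2 (hle.trans (neg_one_sub_half_logb_le hq0 hq1 h01)),
    (mul_two_rpow_le_one_iff hq1).2 (hle.trans ?_)⟩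
  rw [mul_comm q0 q1]
  exact neg_one_sub_half_logb_le hq1 hq0 h10

theorem stmt18 (q0 q1 : ℝ) (hq0 : 0 < q0) (hq1 : 0 < q1) (hs : q0 + q1 = 1)
    (hcond : max q0 q1 ≤ 4 * min q0 q1) (Δ : ℕ → ℝ)
    (hΔ : ∀ m, 1 ≤ m → IsLeast {x : ℝ | ∃ C : Finset (List Bool),
        MaximalPrefixFree C ∧ C.card = 2 ^ m ∧ x = Dkl q0 q1 C / EL C} (Δ m)) :
    ∀ m, 1 ≤ m → Δ m ≤ -1 - (1 / 2) * Real.logb 2 (q0 * q1) ∧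
      q0 * (2 : ℝ) ^ (Δ m) ≤ 1 ∧ q1 * (2 : ℝ) ^ (Δ m) ≤ 1 :=
  stmt18_general q0 q1 hq0 hq1 hcond Δ hΔ
end
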